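/- Let S ⊆ H1, T ⊆ H2 be closed subspaces and A : H1 → H2 a bounded operator. Then A is (S,T)-complementable if and only if H1 = S⊥ + A⁻¹(T) and H2 = T⊥ + (A*)⁻¹(S). -/

import Mathlib

/-!
If `P` is idempotent with `range P† = S`, then `ker P = Sᗮ`, so `H₁ = ker P ⊕ range P` and
`A (range P) ⊆ T` give `H₁ = Sᗮ + A⁻¹(T)`; the second identity is the same statement for the
idempotent `Q†`, because `(Q A)† = A† Q†`. Conversely, if `K ⊔ V = ⊤` for closed subspaces `K` and
`V`, then `(K ⊓ V)ᗮ ⊓ V` is a closed complement of `K` lying inside `V`. The projection onto it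
along `K = Sᗮ` is an idempotent `P` with `range P ⊆ V = A⁻¹(T)` and `range P† = (ker P)ᗮ = S`.
-/

open ContinuousLinearMap Submodule

variable {H₁ H₂ : Type*} [NormedAddCommGroup H₁] [InnerProductSpace ℂ H₁] [CompleteSpace H₁]
  [NormedAddCommGroup H₂] [InnerProductSpace ℂ H₂] [CompleteSpace H₂]

theorem ContinuousLinearMap.range_comp_le_iff_range_le_comap {R M N L : Type*} [Semiring R]
    [TopologicalSpace M] [AddCommMonoid M] [Module R M]
    [TopologicalSpace N] [AddCommMonoid N] [Module R N]
    [TopologicalSpace L] [AddCommMonoid L] [Module R L]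
    (A : N →L[R] L) (P : M →L[R] N) (W : Submodule R L) :
    (A ∘L P : M →ₗ[R] L).range ≤ W ↔ (P : M →ₗ[R] N).range ≤ W.comap (A : N →ₗ[R] L) := by
  rw [toLinearMap_comp, LinearMap.range_comp, map_le_iff_le_comap]

section Hilbert

variable {𝕜 E : Type*} [RCLike 𝕜] [NormedAddCommGroup E] [InnerProductSpace 𝕜 E] [CompleteSpace E]

theorem Submodule.exists_isClosed_isCompl_le_of_sup_eq_top {K V : Submodule 𝕜 E}
    (hK : IsClosed (K : Set E)) (hV : IsClosed (V : Set E)) (hKV : K ⊔ V = ⊤) :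
    ∃ N : Submodule 𝕜 E, IsClosed (N : Set E) ∧ IsCompl N K ∧ N ≤ V := by
  have : CompleteSpace ↥(K ⊓ V) := (hK.inter hV).completeSpace_coe
  refine ⟨(K ⊓ V)ᗮ ⊓ V, (K ⊓ V).isClosed_orthogonal.inter hV, ⟨?_, ?_⟩, inf_le_right⟩
  · rw [disjoint_iff_inf_le]
    rintro x ⟨⟨hx_orth, hxV⟩, hxK⟩
    exact inner_self_eq_zero.mp <| (K ⊓ V).inner_right_of_mem_orthogonal ⟨hxK, hxV⟩ hx_orth
  · rw [codisjoint_iff, ← hKV]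
    calc (K ⊓ V)ᗮ ⊓ V ⊔ K = K ⊔ (K ⊓ V ⊔ (K ⊓ V)ᗮ ⊓ V) := by
          rw [← sup_assoc, sup_inf_self, sup_comm]
      _ = K ⊔ V := by rw [sup_orthogonal_inf_of_hasOrthogonalProjection inf_le_right]

theorem ContinuousLinearMap.exists_isIdempotentElem_ker_eq_range_le {K V : Submodule 𝕜 E}
    (hK : IsClosed (K : Set E)) (hV : IsClosed (V : Set E)) (hKV : K ⊔ V = ⊤) :
    ∃ P : E →L[𝕜] E, IsIdempotentElem P ∧ (P : E →ₗ[𝕜] E).ker = K ∧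
      (P : E →ₗ[𝕜] E).range ≤ V := by
  obtain ⟨N, hN, hNK, hNV⟩ := exists_isClosed_isCompl_le_of_sup_eq_top hK hV hKV
  have h := hNK.isTopCompl_of_isClosed hN hK
  exact ⟨N.projectionL K h, isIdempotentElem_projectionL h, ker_projectionL h,
    (range_projectionL h).le.trans hNV⟩

theorem ContinuousLinearMap.IsIdempotentElem.range_adjoint {P : E →L[𝕜] E}
    (hP : IsIdempotentElem P) : (adjoint P : E →ₗ[𝕜] E).range = (P : E →ₗ[𝕜] E).kerᗮ := by
  have hclosed := (star_eq_adjoint P ▸ hP.star).isClosed_range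
  rw [orthogonal_ker, hclosed.submodule_topologicalClosure_eq]

theorem Submodule.orthogonal_sup_eq_top_iff_exists_isIdempotentElem {U V : Submodule 𝕜 E}
    [CompleteSpace U] (hV : IsClosed (V : Set E)) :
    Uᗮ ⊔ V = ⊤ ↔ ∃ P : E →L[𝕜] E, IsIdempotentElem P ∧ (adjoint P : E →ₗ[𝕜] E).range = U ∧
      (P : E →ₗ[𝕜] E).range ≤ V := by
  constructor
  · intro h
    obtain ⟨P, hP, hPU, hPV⟩ := exists_isIdempotentElem_ker_eq_range_le U.isClosed_orthogonal hV h
    exact ⟨P, hP, by rw [hP.range_adjoint, hPU, orthogonal_orthogonal], hPV⟩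
  · rintro ⟨P, hP, hPU, hPV⟩
    have hker : Uᗮ = (P : E →ₗ[𝕜] E).ker := by rw [← hPU, orthogonal_range, adjoint_adjoint]
    rw [eq_top_iff, ← (LinearMap.IsIdempotentElem.isCompl hP.toLinearMap).sup_eq_top, sup_comm,
      hker]
    exact sup_le_sup_left hPV _

end Hilbert

theorem complementable_iff_sup_preimage
    (S : Submodule ℂ H₁) [CompleteSpace S] (T : Submodule ℂ H₂) [CompleteSpace T]
    (A : H₁ →L[ℂ] H₂) :
    (∃ (P : H₁ →L[ℂ] H₁) (Q : H₂ →L[ℂ] H₂),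
      IsIdempotentElem P ∧ IsIdempotentElem Q ∧
      LinearMap.range (adjoint P : H₁ →ₗ[ℂ] H₁) = S ∧ LinearMap.range (Q : H₂ →ₗ[ℂ] H₂) = T ∧
      LinearMap.range (A ∘L P : H₁ →ₗ[ℂ] H₂) ≤ T ∧ LinearMap.range (adjoint (Q ∘L A) : H₂ →ₗ[ℂ] H₁) ≤ S) ↔
    (Sᗮ ⊔ Submodule.comap A.toLinearMap T = ⊤ ∧
      Tᗮ ⊔ Submodule.comap (adjoint A).toLinearMap S = ⊤) := by
  have hS : IsClosed (S : Set H₁) := (completeSpace_coe_iff_isComplete.mp ‹_›).isClosed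
  have hT : IsClosed (T : Set H₂) := (completeSpace_coe_iff_isComplete.mp ‹_›).isClosed
  rw [orthogonal_sup_eq_top_iff_exists_isIdempotentElem (V := T.comap A.toLinearMap)
      (hT.preimage A.continuous),
    orthogonal_sup_eq_top_iff_exists_isIdempotentElem (V := S.comap (adjoint A).toLinearMap)
      (hS.preimage (adjoint A).continuous)]
  simp only [range_comp_le_iff_range_le_comap, adjoint_comp]
  constructor
  · rintro ⟨P, Q, hP, hQ, hPS, hQT, hAP, hQA⟩
    exact ⟨⟨P, hP, hPS, hAP⟩, adjoint Q, star_eq_adjoint Q ▸ hQ.star, by rwa [adjoint_adjoint], hQA⟩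
  · rintro ⟨⟨P, hP, hPS, hAP⟩, R, hR, hRT, hRA⟩
    refine ⟨P, adjoint R, hP, star_eq_adjoint R ▸ hR.star, hPS, hRT, hAP, ?_⟩
    rwa [adjoint_adjoint]
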